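/- arXiv:2312.01176 — 3 statements merged into one kernel-verified Lean document; each statement's English description precedes it below -/
import Mathlib

section
/- The greatest common divisor of the numbers of arcs connecting the various pairs of marked points is invariant under the action of the cactus group J_n: for every g ∈ J_n and every x ∈ X(l_1,...,l_n,l_∞), the gcd of the arc-multiplicities between pairs of points in g·x equals the corresponding gcd for x. -/
namespace CactusPaper

/-- The indexing set of the generators `s_{p,q}`, `1 ≤ p < q ≤ n`, of the cactus group. -/
abbrev GenIdx (n : ℕ) : Type := {pq : ℕ × ℕ // 1 ≤ pq.1 ∧ pq.1 < pq.2 ∧ pq.2 ≤ n}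

/-- The defining relations of the cactus group `J_n`:
`s_{p,q}² = e`;  `s_{p,q} s_{p',q'} = s_{p',q'} s_{p,q}` whenever the intervals `[p,q]` and
`[p',q']` are disjoint;  `s_{p,q} s_{p',q'} s_{p,q} = s_{p+q-q', p+q-p'}` whenever
`p ≤ p' < q' ≤ q`. -/
def cactusRels (n : ℕ) : Set (FreeGroup (GenIdx n)) :=
  {w | (∃ s : GenIdx n, w = FreeGroup.of s * FreeGroup.of s) ∨
    (∃ s t : GenIdx n, (s.1.2 < t.1.1 ∨ t.1.2 < s.1.1) ∧
      w = FreeGroup.of s * FreeGroup.of t * (FreeGroup.of s)⁻¹ * (FreeGroup.of t)⁻¹) ∨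
    (∃ s t u : GenIdx n, s.1.1 ≤ t.1.1 ∧ t.1.2 ≤ s.1.2 ∧
      u.1.1 = s.1.1 + s.1.2 - t.1.2 ∧ u.1.2 = s.1.1 + s.1.2 - t.1.1 ∧
      w = FreeGroup.of s * FreeGroup.of t * FreeGroup.of s * (FreeGroup.of u)⁻¹)}

/-- The cactus group `J_n`, presented by the generators `s_{p,q}` and the cactus relations. -/
abbrev CactusGroup (n : ℕ) : Type := PresentedGroup (cactusRels n)

/-- The generator `s_{p,q}` of the cactus group `J_n`. -/
def gen (n : ℕ) (s : GenIdx n) : CactusGroup n := PresentedGroup.of s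

/-- The generator `s_{p,q}` of `J_n`, with the constraints on `p, q` given separately. -/
def genPQ (n p q : ℕ) (h1 : 1 ≤ p) (h2 : p < q) (h3 : q ≤ n) : CactusGroup n :=
  gen n ⟨(p, q), h1, h2, h3⟩

/-- Raw data of an arc diagram on the disc with `n+1` marked boundary points:
position `0` carries `z_∞` and positions `1, …, n` carry the finite points, in clockwise
order starting from `z_∞`;  `lbl k` is the index `i` of the label `z_i` sitting at
position `k`, and `mult i j` is the number of (parallel, non-crossing) arcs joining the
marked points at positions `i` and `j`.  (An isotopy class of a system of non-crossing
arcs is faithfully recorded by these multiplicities.) -/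
structure PreDiagram (n : ℕ) where
  lbl : ℕ → ℕ
  mult : ℕ → ℕ → ℕ

/-- The valence (total number of arc ends) at position `k`. -/
def valence {n : ℕ} (D : PreDiagram n) (k : ℕ) : ℕ :=
  ∑ j ∈ Finset.range (n + 1), D.mult k j

/-- `D` is an arc diagram in `X(l 1, …, l n, linf)`: the labels of positions `1, …, n` are
a bijection of `{1, …, n}` (normalized to `0` elsewhere), the multiplicity matrix is
symmetric, loopless and supported on positions `≤ n`, the arcs are pairwise non-crossing,
the point `z_∞` has valence `linf`, and the point `z_i` has valence `l i`. -/
def IsDiagram {n : ℕ} (l : ℕ → ℕ) (linf : ℕ) (D : PreDiagram n) : Prop :=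
  Set.BijOn D.lbl (Set.Icc 1 n) (Set.Icc 1 n) ∧
  (∀ k, k ∉ Set.Icc 1 n → D.lbl k = 0) ∧
  (∀ i j, D.mult i j = D.mult j i) ∧
  (∀ i, D.mult i i = 0) ∧
  (∀ i j, n < i ∨ n < j → D.mult i j = 0) ∧
  (∀ a b c d, a < b → b < c → c < d → d ≤ n → D.mult a c = 0 ∨ D.mult b d = 0) ∧
  valence D 0 = linf ∧
  (∀ k, 1 ≤ k → k ≤ n → valence D k = l (D.lbl k))

/-- The set `X(l 1, …, l n, linf)` of arc diagrams. -/
abbrev ADiagram (n : ℕ) (l : ℕ → ℕ) (linf : ℕ) : Type :=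
  {D : PreDiagram n // IsDiagram l linf D}

/-- The involution of positions reversing the interval `[p,q]`. -/
def sigmaRev (p q k : ℕ) : ℕ := if p ≤ k ∧ k ≤ q then p + q - k else k

/-- The number of arcs at position `a` crossing the shear line of `s_{p,q}`, i.e. joining
`a` to a position outside `[p,q]`. -/
def crossDeg {n : ℕ} (D : PreDiagram n) (p q a : ℕ) : ℕ :=
  ∑ j ∈ (Finset.range (n + 1)).filter (fun j => j < p ∨ q < j), D.mult a j

/-- Cumulative count, along the shear line of `s_{p,q}`, of the crossing arcs of the *new*
(reversed) diagram emanating from positions `p, …, a` of the active region (the point at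
position `b` of the new diagram is the point at position `p+q-b` of the old one). -/
def inCum {n : ℕ} (D : PreDiagram n) (p q a : ℕ) : ℕ :=
  ∑ b ∈ Finset.Icc p a, crossDeg D p q (p + q - b)

/-- The positions outside `[p,q]` in their order along the shear line, starting from the
end of the shear line lying between positions `p-1` and `p`:
`p-1, p-2, …, 1, 0, n, n-1, …, q+1`. -/
def outRank (n p j : ℕ) : ℕ := if j < p then p - 1 - j else p + (n - j)

/-- Cumulative count, along the shear line, of the crossing arc ends outside the active
region, up to (and including) those attached at position `j`. -/
def outCum {n : ℕ} (D : PreDiagram n) (p q j : ℕ) : ℕ :=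
  ∑ j' ∈ (Finset.range (n + 1)).filter
      (fun j' => (j' < p ∨ q < j') ∧ outRank n p j' ≤ outRank n p j),
    crossDeg D p q j'

/-- The number of arcs of the new diagram joining a position `a ∈ [p,q]` to a position
`j ∉ [p,q]`: the cut arcs are reconnected matching up, in order, the crossing arc ends on
the two sides of the shear line (this being the unique non-crossing reconnection), so this
number is the overlap of the interval of shear-line indices belonging to `a` with the one
belonging to `j`. -/
def crossMult {n : ℕ} (D : PreDiagram n) (p q a j : ℕ) : ℕ :=
  min (inCum D p q a) (outCum D p q j) -
    max (inCum D p q a - crossDeg D p q (p + q - a)) (outCum D p q j - crossDeg D p q j)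

/-- The action of the generator `s_{p,q}` on arc-diagram data: the marked points at the
positions in `[p,q]` are reversed (together with their labels), the arcs inside the active
region are reflected along with them, the arcs outside are kept, and the arcs crossing the
shear line are reconnected in the unique non-crossing fashion. -/
def genAct {n : ℕ} (p q : ℕ) (D : PreDiagram n) : PreDiagram n where
  lbl := fun k => D.lbl (sigmaRev p q k)
  mult := fun i j =>
    if n < i ∨ n < j then 0
    else if (p ≤ i ∧ i ≤ q) ∧ (p ≤ j ∧ j ≤ q) then D.mult (sigmaRev p q i) (sigmaRev p q j)
    else if p ≤ i ∧ i ≤ q then crossMult D p q i j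
    else if p ≤ j ∧ j ≤ q then crossMult D p q j i
    else D.mult i j

/-- `A` is *the* action of the cactus group `J_n` on `X(l 1, …, l n, linf)`: a group
homomorphism `J_n →* Perm(X)` sending each generator `s_{p,q}` to the
reversal-and-reconnection operation `genAct p q`. -/
def IsCactusAction {n : ℕ} (l : ℕ → ℕ) (linf : ℕ)
    (A : CactusGroup n →* Equiv.Perm (ADiagram n l linf)) : Prop :=
  ∀ (s : GenIdx n) (x : ADiagram n l linf),
    ((A (gen n s)) x).1 = genAct s.1.1 s.1.2 x.1

/-- The border thickness of an arc diagram: the minimal number of arcs joining a pair of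
adjacent marked points (positions `k` and `k+1 mod (n+1)`). -/
noncomputable def borderThickness {n : ℕ} (D : PreDiagram n) : ℕ :=
  sInf {m : ℕ | ∃ k ≤ n, m = D.mult k ((k + 1) % (n + 1))}

/-- The greatest common divisor of all the arc multiplicities of the diagram. -/
def multGcd {n : ℕ} (D : PreDiagram n) : ℕ :=
  Finset.gcd (Finset.range (n + 1) ×ˢ Finset.range (n + 1)) (fun ij => D.mult ij.1 ij.2)

/-- Clockwise cyclic distance from position `k` to position `j` among the `n+1`
boundary positions. -/
def cdist (n k j : ℕ) : ℕ := (j + (n + 1) - k) % (n + 1)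

/-- The number of arc ends at `k` lying strictly clockwise of the bundle of parallel arcs
joining `k` to `j` (the arcs from `k` to clockwise-nearer targets attach to `k` on the
clockwise side). -/
def cumBefore {n : ℕ} (D : PreDiagram n) (k j : ℕ) : ℕ :=
  ∑ j' ∈ (Finset.range (n + 1)).filter (fun j' => cdist n k j' < cdist n k j), D.mult k j'

/-- Arc ends: at position `k` the `valence D k` arc ends are numbered `0, 1, …` in
clockwise order.  `ArcRel D (k, t) (j, s)` holds exactly when some arc of the diagram has
its two ends at `(k, t)` and `(j, s)`: the `r`-th parallel arc (counted from the outermost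
one) of the bundle joining `k` and `j` attaches at its two endpoints in opposite relative
orders. -/
def ArcRel {n : ℕ} (D : PreDiagram n) (e f : ℕ × ℕ) : Prop :=
  ∃ r < D.mult e.1 f.1,
    e.2 = valence D e.1 - cumBefore D e.1 f.1 - 1 - r ∧
    f.2 = valence D f.1 - cumBefore D f.1 e.1 - D.mult e.1 f.1 + r

/-- The right-hand-rule pairing: at each marked point the consecutive arc ends `2r` and
`2r + 1` (in clockwise order) are joined within one loop of the decomposition. -/
def RhrRel {n : ℕ} (D : PreDiagram n) (e f : ℕ × ℕ) : Prop :=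
  e.1 = f.1 ∧ ∃ r, e.2 = 2 * r ∧ f.2 = 2 * r + 1

/-- The arc ends of an arc diagram. -/
abbrev Endpoint {n : ℕ} (D : PreDiagram n) : Type :=
  {e : ℕ × ℕ // e.1 ≤ n ∧ e.2 < valence D e.1}

/-- The number of components of an arc diagram all of whose valences are even: the number
of closed non-overlapping loops into which the arcs decompose under the right-hand rule.
Formally, it is the number of equivalence classes of arc ends under the equivalence
relation generated by "being the two ends of one arc" (`ArcRel`) together with the
right-hand-rule pairing at each marked point (`RhrRel`). -/
noncomputable def numComponents {n : ℕ} (D : PreDiagram n) : ℕ :=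
  Nat.card (Quot (fun e f : Endpoint D => ArcRel D e.1 f.1 ∨ RhrRel D e.1 f.1))

/- The gcd `d` of the arc multiplicities of `D` divides every multiplicity of `s_{p,q} · D`:
the new multiplicities are built from the old ones by sums, truncated differences, `min` and
`max`, all of which preserve the multiples of `d`. Since `s_{p,q}` is an involution, the
reverse divisibility is the same statement for `s_{p,q} · D`, so the gcd is preserved by
every generator, hence by all of `J_n`. -/

section Divisibility

variable {n : ℕ} {D : PreDiagram n}

lemma multGcd_dvd_mult (hsupp : ∀ i j, n < i ∨ n < j → D.mult i j = 0) (i j : ℕ) :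
    multGcd D ∣ D.mult i j := by
  by_cases h : n < i ∨ n < j
  · rw [hsupp i j h]
    exact dvd_zero _
  · exact Finset.gcd_dvd (b := (i, j)) (Finset.mem_product.mpr
      ⟨Finset.mem_range.mpr (by omega), Finset.mem_range.mpr (by omega)⟩)

lemma multGcd_dvd_crossDeg (hsupp : ∀ i j, n < i ∨ n < j → D.mult i j = 0) (p q a : ℕ) :
    multGcd D ∣ crossDeg D p q a :=
  Finset.dvd_sum fun j _ => multGcd_dvd_mult hsupp a j

lemma multGcd_dvd_crossMult (hsupp : ∀ i j, n < i ∨ n < j → D.mult i j = 0) (p q a j : ℕ) :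
    multGcd D ∣ crossMult D p q a j := by
  have hdeg := multGcd_dvd_crossDeg hsupp p q
  have hin : multGcd D ∣ inCum D p q a := Finset.dvd_sum fun b _ => hdeg _
  have hout : multGcd D ∣ outCum D p q j := Finset.dvd_sum fun j' _ => hdeg _
  have hmin : multGcd D ∣ min (inCum D p q a) (outCum D p q j) := by
    rcases min_choice (inCum D p q a) (outCum D p q j) with h | h <;> rw [h]
    exacts [hin, hout]
  have hmax : multGcd D ∣
      max (inCum D p q a - crossDeg D p q (p + q - a)) (outCum D p q j - crossDeg D p q j) := by
    rcases max_choice (inCum D p q a - crossDeg D p q (p + q - a))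
        (outCum D p q j - crossDeg D p q j) with h | h <;> rw [h]
    exacts [Nat.dvd_sub hin (hdeg _), Nat.dvd_sub hout (hdeg _)]
  exact Nat.dvd_sub hmin hmax

lemma multGcd_dvd_multGcd_genAct (hsupp : ∀ i j, n < i ∨ n < j → D.mult i j = 0) (p q : ℕ) :
    multGcd D ∣ multGcd (genAct p q D) := by
  refine Finset.dvd_gcd fun ij _ => ?_
  simp only [genAct]
  split_ifs
  · exact dvd_zero _
  · exact multGcd_dvd_mult hsupp _ _
  · exact multGcd_dvd_crossMult hsupp _ _ _ _
  · exact multGcd_dvd_crossMult hsupp _ _ _ _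
  · exact multGcd_dvd_mult hsupp _ _

end Divisibility

lemma _root_.PresentedGroup.apply_eq_of_forall_of {α X β : Type*} {rels : Set (FreeGroup α)}
    (A : PresentedGroup rels →* Equiv.Perm X) (f : X → β)
    (h : ∀ a x, f (A (PresentedGroup.of a) x) = f x) (g : PresentedGroup rels) (x : X) :
    f (A g x) = f x :=
  let H : Subgroup (PresentedGroup rels) :=
    { carrier := {g | ∀ x, f (A g x) = f x}
      one_mem' := fun x => by rw [map_one, Equiv.Perm.one_apply]
      mul_mem' := fun hg hg' x => by rw [map_mul, Equiv.Perm.mul_apply, hg, hg']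
      inv_mem' := fun {g} hg x => by
        rw [← hg, ← Equiv.Perm.mul_apply, ← map_mul, mul_inv_cancel, map_one,
          Equiv.Perm.one_apply] }
  PresentedGroup.generated_by rels H h g x

lemma _root_.Function.Involutive.eq_of_dvd {X : Type*} {σ : X → X} (hσ : Function.Involutive σ)
    {f : X → ℕ} (h : ∀ x, f x ∣ f (σ x)) (x : X) : f (σ x) = f x :=
  Nat.dvd_antisymm (by simpa only [hσ x] using h (σ x)) (h x)

lemma gen_mul_self {n : ℕ} (s : GenIdx n) : gen n s * gen n s = 1 :=
  PresentedGroup.one_of_mem (Or.inl ⟨s, rfl⟩)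

lemma involutive_apply_gen {n : ℕ} {X : Type*} (A : CactusGroup n →* Equiv.Perm X)
    (s : GenIdx n) : Function.Involutive (A (gen n s)) := fun x => by
  rw [← Equiv.Perm.mul_apply, ← map_mul, gen_mul_self, map_one, Equiv.Perm.one_apply]

/-- The greatest common divisor of the numbers of arcs connecting the
various pairs of marked points is invariant under the action of the cactus group `J_n`:
for every `g ∈ J_n` and every `x ∈ X(l 1, …, l n, linf)`, the gcd of the arc
multiplicities of `g • x` equals the corresponding gcd for `x`. -/
theorem statement_5 (n : ℕ) (l : ℕ → ℕ) (linf : ℕ)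
    (A : CactusGroup n →* Equiv.Perm (ADiagram n l linf)) (hA : IsCactusAction l linf A)
    (g : CactusGroup n) (x : ADiagram n l linf) :
    multGcd ((A g) x).1 = multGcd x.1 := by
  refine PresentedGroup.apply_eq_of_forall_of A (fun y => multGcd y.1) (fun s => ?_) g x
  refine (involutive_apply_gen A s).eq_of_dvd (f := fun y => multGcd y.1) fun y => ?_
  obtain ⟨-, -, -, -, hsupp, -⟩ := y.2
  rw [hA s y]
  exact multGcd_dvd_multGcd_genAct hsupp _ _

end CactusPaper
end

section
/- For n = 3, an arc diagram is uniquely determined by the valences of its four marked points together with the location of a break in the border: if two arc diagrams with the same clockwise order of marked points and the same valences (a at z_∞ and b, c, d at the three finite points, clockwise) both have zero arcs between the same specified adjacent pair of marked points, then the two diagrams are equal. Equivalently, the associated linear system (with unknowns the arc-multiplicities between the remaining adjacent pairs and the multiplicity of the single possible long chord) has at most one nonnegative integer solution, since its coefficient matrix has determinant 2. -/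
open Fin.NatCast in
theorem Fin.eq_of_add_add_one_eq {n : ℕ} [NeZero n] {M : Type*} [Add M] [IsLeftCancelAdd M]
    {f g : Fin n → M} (h : ∀ i, f i + f (i + 1) = g i + g (i + 1)) {k : Fin n}
    (hk : f k = g k) : f = g := by
  have propagate : ∀ j : ℕ, f (k + j) = g (k + j) := by
    intro j
    induction j with
    | zero => simpa using hk
    | succ j ih =>
      have hj := h (k + j)
      rw [ih] at hj
      simpa [add_assoc] using add_left_cancel hj
  funext i
  simpa using propagate (i - k).val

theorem Nat.eq_and_eq_of_add_eq_add_of_or_eq_zero {a b c d : ℕ} (h : a + d = c + b)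
    (hab : a = 0 ∨ b = 0) (hcd : c = 0 ∨ d = 0) : a = c ∧ b = d := by
  omega

namespace CactusPaper

def borderMult {n : ℕ} (D : PreDiagram n) (i : Fin (n + 1)) : ℕ :=
  D.mult i (i + 1 : Fin (n + 1))

theorem borderMult_mk {n : ℕ} (D : PreDiagram n) {k : ℕ} (hk : k ≤ n) :
    borderMult D ⟨k, by omega⟩ = D.mult k ((k + 1) % (n + 1)) := by
  simp [borderMult, Fin.val_add]

theorem valence_eq_of_isDiagram {n : ℕ} {l : ℕ → ℕ} {linf : ℕ} {x y : PreDiagram n}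
    (hx : IsDiagram l linf x) (hy : IsDiagram l linf y) (hlbl : x.lbl = y.lbl) {j : ℕ}
    (hj : j ≤ n) : valence x j = valence y j := by
  rcases j.eq_zero_or_pos with rfl | hj0
  · rw [hx.2.2.2.2.2.2.1, hy.2.2.2.2.2.2.1]
  · rw [hx.2.2.2.2.2.2.2 j hj0 hj, hy.2.2.2.2.2.2.2 j hj0 hj, hlbl]

section Square

variable {D : PreDiagram 3} (hs : ∀ i j, D.mult i j = D.mult j i) (hd : ∀ i, D.mult i i = 0)
include hs hd

theorem valence_add_one (i : Fin 4) :
    valence D (i + 1 : Fin 4) =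
      borderMult D i + borderMult D (i + 1) + D.mult (i + 1 : Fin 4) (i + 3 : Fin 4) := by
  fin_cases i <;>
    simp [valence, borderMult, Finset.sum_range_succ, hs _ 0, hs 2 1, hs 3 1, hs 3 2, hd] <;> omega

theorem valence_add_valence_add_two_mul :
    valence D 0 + valence D 2 + 2 * D.mult 1 3 = valence D 1 + valence D 3 + 2 * D.mult 0 2 := by
  simp [valence, Finset.sum_range_succ, hs _ 0, hs 2 1, hs 3 1, hs 3 2, hd]
  omega

end Square

section SameValences

variable {l : ℕ → ℕ} {linf : ℕ} {x y : PreDiagram 3}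
  (hx : IsDiagram l linf x) (hy : IsDiagram l linf y) (hlbl : x.lbl = y.lbl)
include hx hy hlbl

theorem mult_diagonals_eq_of_isDiagram :
    x.mult 0 2 = y.mult 0 2 ∧ x.mult 1 3 = y.mult 1 3 := by
  have hval (j : ℕ) (hj : j ≤ 3) := valence_eq_of_isDiagram hx hy hlbl hj
  obtain ⟨-, -, hxs, hxd, -, hxc, -⟩ := hx
  obtain ⟨-, -, hys, hyd, -, hyc, -⟩ := hy
  refine Nat.eq_and_eq_of_add_eq_add_of_or_eq_zero ?_
    (hxc 0 1 2 3 (by omega) (by omega) (by omega) le_rfl)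
    (hyc 0 1 2 3 (by omega) (by omega) (by omega) le_rfl)
  have hxsum := valence_add_valence_add_two_mul hxs hxd
  have hysum := valence_add_valence_add_two_mul hys hyd
  rw [hval 0 (by omega), hval 1 (by omega), hval 2 (by omega), hval 3 le_rfl] at hxsum
  omega

theorem borderMult_eq_of_isDiagram {k : Fin 4} (hk : borderMult x k = borderMult y k) :
    borderMult x = borderMult y := by
  obtain ⟨h02, h13⟩ := mult_diagonals_eq_of_isDiagram hx hy hlbl
  have hval (j : ℕ) (hj : j ≤ 3) := valence_eq_of_isDiagram hx hy hlbl hj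
  obtain ⟨-, -, hxs, hxd, -⟩ := hx
  obtain ⟨-, -, hys, hyd, -⟩ := hy
  refine Fin.eq_of_add_add_one_eq (fun i => ?_) hk
  have hdiag :
      x.mult (i + 1 : Fin 4) (i + 3 : Fin 4) = y.mult (i + 1 : Fin 4) (i + 3 : Fin 4) := by
    fin_cases i <;> simp [h02, h13, hxs 2 0, hys 2 0, hxs 3 1, hys 3 1]
  have hxsum := valence_add_one hxs hxd i
  have hysum := valence_add_one hys hyd i
  rw [hval _ (by omega)] at hxsum
  omega

end SameValences

theorem mult_eq_of_borderMult_eq {D D' : PreDiagram 3}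
    (hs : ∀ i j, D.mult i j = D.mult j i) (hd : ∀ i, D.mult i i = 0)
    (hn : ∀ i j, 3 < i ∨ 3 < j → D.mult i j = 0)
    (hs' : ∀ i j, D'.mult i j = D'.mult j i) (hd' : ∀ i, D'.mult i i = 0)
    (hn' : ∀ i j, 3 < i ∨ 3 < j → D'.mult i j = 0)
    (hborder : borderMult D = borderMult D') (h02 : D.mult 0 2 = D'.mult 0 2)
    (h13 : D.mult 1 3 = D'.mult 1 3) : D.mult = D'.mult := by
  have hb : ∀ i : Fin 4, D.mult i (i + 1 : Fin 4) = D'.mult i (i + 1 : Fin 4) :=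
    congrFun hborder
  have h01 := hb 0; have h12 := hb 1; have h23 := hb 2; have h30 := hb 3
  simp only [Fin.isValue, Fin.val_zero, Fin.val_one, Fin.val_two, Fin.reduceAdd] at h01 h12 h23 h30
  funext i j
  by_cases hij : 3 < i ∨ 3 < j
  · rw [hn i j hij, hn' i j hij]
  · obtain ⟨hi, hj⟩ := not_or.mp hij
    interval_cases i <;> interval_cases j <;> simp_all

/-- For `n = 3`, an arc diagram is uniquely determined by the valences of
its four marked points together with the location of a break in the border: if two arc
diagrams with the same clockwise order of marked points (same labeling of positions) and
the same valences both have zero arcs between the same specified adjacent pair of marked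
points, then the two diagrams are equal. -/
theorem statement_6 (l : ℕ → ℕ) (linf : ℕ) (x y : PreDiagram 3)
    (hx : IsDiagram l linf x) (hy : IsDiagram l linf y) (hlbl : x.lbl = y.lbl)
    (k : ℕ) (hk : k ≤ 3)
    (hxk : x.mult k ((k + 1) % 4) = 0) (hyk : y.mult k ((k + 1) % 4) = 0) :
    x = y := by
  have hborder : borderMult x = borderMult y :=
    borderMult_eq_of_isDiagram hx hy hlbl (k := ⟨k, by omega⟩)
      (by rw [borderMult_mk x hk, borderMult_mk y hk, hxk, hyk])
  obtain ⟨h02, h13⟩ := mult_diagonals_eq_of_isDiagram hx hy hlbl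
  obtain ⟨-, -, hxs, hxd, hxn, -⟩ := hx
  obtain ⟨-, -, hys, hyd, hyn, -⟩ := hy
  have hmult := mult_eq_of_borderMult_eq hxs hxd hxn hys hyd hyn hborder h02 h13
  cases x
  cases y
  simp only [PreDiagram.mk.injEq] at hlbl hmult ⊢
  exact ⟨hlbl, hmult⟩

end CactusPaper
end

section
/- The set X(2,2,2,2) of arc diagrams with n = 3 labeled finite points and the point z_∞, all of valence 2, contains exactly 18 elements: there are exactly 3 such diagrams up to relabeling of the finite points z_1, z_2, z_3, and each gives rise to 6 labeled diagrams. -/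
namespace CactusPaper

/-!
When all finite points have the same valence, an arc diagram is an independent choice of a
labelling, i.e. a bijection of `{1, …, n}` (`n!` choices), and of a multiplicity matrix. For
`n = 3` and all valences `2`, adding the valence equations at positions `0` and `2` and
subtracting those at `1` and `3` gives `2 (m 0 2 - m 1 3) = 0`: the two diagonals of the square
carry equally many arcs, and as they cross, both are empty. The arcs then run along the four
sides, and the valence equations leave the single parameter `a = m 0 1 ∈ {0, 1, 2}`.
-/

def IsLabelling (n : ℕ) (f : ℕ → ℕ) : Prop :=
  Set.BijOn f (Set.Icc 1 n) (Set.Icc 1 n) ∧ ∀ k, k ∉ Set.Icc 1 n → f k = 0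

def IsArcSystem (n val valInf : ℕ) (m : ℕ → ℕ → ℕ) : Prop :=
  (∀ i j, m i j = m j i) ∧ (∀ i, m i i = 0) ∧ (∀ i j, n < i ∨ n < j → m i j = 0) ∧
  (∀ a b c d, a < b → b < c → c < d → d ≤ n → m a c = 0 ∨ m b d = 0) ∧
  ∑ j ∈ Finset.range (n + 1), m 0 j = valInf ∧
  ∀ k, 1 ≤ k → k ≤ n → ∑ j ∈ Finset.range (n + 1), m k j = val

theorem isDiagram_const_iff {n val valInf : ℕ} (D : PreDiagram n) :
    IsDiagram (fun _ => val) valInf D ↔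
      IsLabelling n D.lbl ∧ IsArcSystem n val valInf D.mult :=
  and_assoc.symm

section Labelling

variable {n : ℕ}

def labellingOfPerm (σ : Equiv.Perm (Set.Icc 1 n)) (k : ℕ) : ℕ :=
  if h : k ∈ Set.Icc 1 n then σ ⟨k, h⟩ else 0

theorem isLabelling_labellingOfPerm (σ : Equiv.Perm (Set.Icc 1 n)) :
    IsLabelling n (labellingOfPerm σ) := by
  refine ⟨⟨fun k hk => ?_, fun k hk k' hk' hkk' => ?_, fun k hk => ?_⟩, fun k hk => ?_⟩
  · simp only [labellingOfPerm, dif_pos hk, Subtype.coe_prop]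
  · simp only [labellingOfPerm, dif_pos hk, dif_pos hk'] at hkk'
    simpa using σ.injective (Subtype.ext hkk')
  · refine ⟨σ.symm ⟨k, hk⟩, Subtype.coe_prop _, ?_⟩
    simp [labellingOfPerm]
  · simp [labellingOfPerm, hk]

noncomputable def labellingEquivPerm : {f // IsLabelling n f} ≃ Equiv.Perm (Set.Icc 1 n) where
  toFun f := f.2.1.equiv
  invFun σ := ⟨labellingOfPerm σ, isLabelling_labellingOfPerm σ⟩
  left_inv f := by
    ext k
    by_cases hk : k ∈ Set.Icc 1 n
    · simp [labellingOfPerm, hk, Set.BijOn.equiv]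
    · simp [labellingOfPerm, hk, f.2.2 k hk]
  right_inv σ := by
    ext k
    simp [labellingOfPerm, Set.BijOn.equiv]

theorem card_labelling (n : ℕ) : Nat.card {f // IsLabelling n f} = n.factorial := by
  rw [Nat.card_congr labellingEquivPerm, Nat.card_perm, Nat.card_coe_set_eq,
    Set.ncard_Icc_nat, Nat.add_sub_cancel]

end Labelling

section ConstantValence

variable {n val valInf : ℕ}

def diagramEquivProd :
    ADiagram n (fun _ => val) valInf ≃
      {f // IsLabelling n f} × {m // IsArcSystem n val valInf m} where
  toFun D := (⟨D.1.lbl, ((isDiagram_const_iff D.1).1 D.2).1⟩,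
    ⟨D.1.mult, ((isDiagram_const_iff D.1).1 D.2).2⟩)
  invFun p := ⟨⟨p.1.1, p.2.1⟩, (isDiagram_const_iff _).2 ⟨p.1.2, p.2.2⟩⟩
  left_inv _ := rfl
  right_inv _ := rfl

def multFiberEquivLabelling {m : ℕ → ℕ → ℕ} (hm : IsArcSystem n val valInf m) :
    {D : PreDiagram n // IsDiagram (fun _ => val) valInf D ∧ D.mult = m} ≃
      {f // IsLabelling n f} where
  toFun D := ⟨D.1.lbl, ((isDiagram_const_iff D.1).1 D.2.1).1⟩
  invFun f := ⟨⟨f.1, m⟩, (isDiagram_const_iff _).2 ⟨f.2, hm⟩, rfl⟩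
  left_inv := by rintro ⟨⟨f, m'⟩, hD, rfl⟩; rfl
  right_inv _ := rfl

theorem exists_isDiagram_mult_eq_iff (m : ℕ → ℕ → ℕ) :
    (∃ D : PreDiagram n, IsDiagram (fun _ => val) valInf D ∧ D.mult = m) ↔
      IsArcSystem n val valInf m := by
  refine ⟨?_, fun hm => ?_⟩
  · rintro ⟨D, hD, rfl⟩
    exact ((isDiagram_const_iff D).1 hD).2
  · exact ⟨⟨labellingOfPerm 1, m⟩,
      (isDiagram_const_iff _).2 ⟨isLabelling_labellingOfPerm 1, hm⟩, rfl⟩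

end ConstantValence

def squareMult (a : ℕ) : ℕ → ℕ → ℕ := fun i j =>
  if (i = 0 ∧ j = 1) ∨ (i = 1 ∧ j = 0) ∨ (i = 2 ∧ j = 3) ∨ (i = 3 ∧ j = 2) then a
  else if (i = 0 ∧ j = 3) ∨ (i = 3 ∧ j = 0) ∨ (i = 1 ∧ j = 2) ∨ (i = 2 ∧ j = 1) then 2 - a
  else 0

theorem squareMult_zero_one (a : ℕ) : squareMult a 0 1 = a := by
  simp [squareMult]

theorem IsArcSystem.eq_squareMult {m : ℕ → ℕ → ℕ} (h : IsArcSystem 3 2 2 m) :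
    m 0 1 ≤ 2 ∧ m = squareMult (m 0 1) := by
  obtain ⟨hsymm, hloop, hsupp, hcross, hv0, hv⟩ := h
  have hv1 := hv 1 le_rfl (by norm_num)
  have hv2 := hv 2 (by norm_num) (by norm_num)
  have hv3 := hv 3 (by norm_num) le_rfl
  simp only [Finset.sum_range_succ, Finset.sum_range_zero, zero_add] at hv0 hv1 hv2 hv3
  have := hsymm 1 0; have := hsymm 2 0; have := hsymm 3 0
  have := hsymm 2 1; have := hsymm 3 1; have := hsymm 3 2
  have := hloop 0; have := hloop 1; have := hloop 2; have := hloop 3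
  have hdiagonals : m 0 2 = 0 ∧ m 1 3 = 0 := by
    have := hcross 0 1 2 3 (by norm_num) (by norm_num) (by norm_num) le_rfl
    omega
  refine ⟨by omega, funext fun i => funext fun j => ?_⟩
  by_cases hij : 3 < i ∨ 3 < j
  · rw [hsupp i j hij, squareMult]
    split_ifs <;> omega
  · push Not at hij
    obtain ⟨hi, hj⟩ := hij
    interval_cases i <;> interval_cases j <;> simp [squareMult] <;> omega

theorem isArcSystem_squareMult {a : ℕ} (ha : a ≤ 2) : IsArcSystem 3 2 2 (squareMult a) := by
  refine ⟨fun i j => ?_, fun i => ?_, fun i j _ => ?_, fun b c d e _ _ _ _ => ?_, ?_,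
    fun k hk1 hk3 => ?_⟩
  iterate 4 (simp only [squareMult]; split_ifs <;> omega)
  · simp [Finset.sum_range_succ, squareMult]
    omega
  · interval_cases k <;> simp [Finset.sum_range_succ, squareMult] <;> omega

def arcSystemEquivFin : {m // IsArcSystem 3 2 2 m} ≃ Fin 3 where
  toFun m := ⟨m.1 0 1, Nat.lt_succ_of_le m.2.eq_squareMult.1⟩
  invFun a := ⟨squareMult a, isArcSystem_squareMult (Nat.le_of_lt_succ a.2)⟩
  left_inv m := Subtype.ext m.2.eq_squareMult.2.symm
  right_inv a := Fin.ext (squareMult_zero_one a)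

/-- The set `X(2, 2, 2, 2)` of arc diagrams with `n = 3` labeled finite
points and the point `z_∞`, all of valence `2`, contains exactly `18` elements: there are
exactly `3` such diagrams up to relabeling of the finite points `z_1, z_2, z_3` (i.e. `3`
possible underlying unlabeled arc systems), and each gives rise to `6` labeled
diagrams. -/
theorem statement_19 :
    Nat.card (ADiagram 3 (fun _ => 2) 2) = 18 ∧
    Nat.card {m : ℕ → ℕ → ℕ //
        ∃ D : PreDiagram 3, IsDiagram (fun _ => 2) 2 D ∧ D.mult = m} = 3 ∧
    ∀ m : ℕ → ℕ → ℕ, (∃ D : PreDiagram 3, IsDiagram (fun _ => 2) 2 D ∧ D.mult = m) →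
      Nat.card {D : PreDiagram 3 // IsDiagram (fun _ => 2) 2 D ∧ D.mult = m} = 6 := by
  have hlabellings : Nat.card {f // IsLabelling 3 f} = 6 := card_labelling 3
  have harcSystems : Nat.card {m // IsArcSystem 3 2 2 m} = 3 := by
    rw [Nat.card_congr arcSystemEquivFin, Nat.card_fin]
  refine ⟨?_, ?_, fun m hm => ?_⟩
  · rw [Nat.card_congr diagramEquivProd, Nat.card_prod, hlabellings, harcSystems]
  · rw [Nat.card_congr (Equiv.subtypeEquivRight fun m => exists_isDiagram_mult_eq_iff m),
      harcSystems]
  · rw [Nat.card_congr (multFiberEquivLabelling ((exists_isDiagram_mult_eq_iff m).1 hm)),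
      hlabellings]

end CactusPaper
end
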